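/- For 0 < q < 1, α, β > 0, 0 ≤ qx ≤ u, the q-beta-type integral identity ∫_{qx}^u t^{α-1}(qx/t;q)_{α-1}(qt/u;q)_{β-1} d_q t = u^α B_q(α,β) (qx/u;q)_{α+β-1} holds, where B_q is the q-beta function. -/

import Mathlib

open Filter

noncomputable section

namespace QFrac

variable (q : ℝ)

/-- infinite q-shifted factorial `(z;q)_∞` -/
def pochInf (z : ℝ) : ℝ := ∏' n : ℕ, (1 - z * q ^ n)

/-- generalized q-shifted factorial `(z;q)_ν = (z;q)_∞ / (z q^ν;q)_∞` -/
def poch (z ν : ℝ) : ℝ := pochInf q z / pochInf q (z * q ^ ν)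

/-- finite q-shifted factorial `(z;q)_k` -/
def pochN (z : ℝ) (k : ℕ) : ℝ := ∏ i ∈ Finset.range k, (1 - z * q ^ i)

/-- q-Gamma function -/
def qGamma (α : ℝ) : ℝ := pochInf q q / pochInf q (q ^ α) * (1 - q) ^ (1 - α)

/-- Jackson q-integral `∫_0^a f(t) d_q t` -/
def jackson (a : ℝ) (f : ℝ → ℝ) : ℝ := (1 - q) * a * ∑' n : ℕ, q ^ n * f (a * q ^ n)

/-- Jackson q-integral `∫_c^b f(t) d_q t` -/
def jacksonI (c b : ℝ) (f : ℝ → ℝ) : ℝ := jackson q b f - jackson q c f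

/-- left-sided Riemann–Liouville q-fractional integral `I^α_{q,0^+}` -/
def Ileft (α : ℝ) (f : ℝ → ℝ) (x : ℝ) : ℝ :=
  x ^ (α - 1) / qGamma q α * jackson q x (fun t => poch q (q * t / x) (α - 1) * f t)

/-- right-sided Riemann–Liouville q-fractional integral `I^α_{q,b^-}` -/
def Iright (b α : ℝ) (f : ℝ → ℝ) (x : ℝ) : ℝ :=
  (qGamma q α)⁻¹ *
    jacksonI q (q * x) b (fun t => t ^ (α - 1) * poch q (q * x / t) (α - 1) * f t)

/-- Jackson q-derivative -/
def Dq (f : ℝ → ℝ) (x : ℝ) : ℝ := (f x - f (q * x)) / ((1 - q) * x)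

/-- Jackson `q⁻¹`-derivative -/
def Dqinv (f : ℝ → ℝ) (x : ℝ) : ℝ := (f x - f (x / q)) / ((1 - q⁻¹) * x)

/-- left-sided Caputo q-fractional derivative of order `α ∈ (0,1)` -/
def CDleft (α : ℝ) (f : ℝ → ℝ) : ℝ → ℝ := Ileft q (1 - α) (Dq q f)

/-- left-sided Riemann–Liouville q-fractional derivative of order `α ∈ (0,1)` -/
def DRLleft (α : ℝ) (f : ℝ → ℝ) : ℝ → ℝ := Dq q (Ileft q (1 - α) f)

/-- right-sided Riemann–Liouville q-fractional derivative of order `α ∈ (0,1)` -/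
def DRLright (b α : ℝ) (f : ℝ → ℝ) (x : ℝ) : ℝ :=
  (-1 / q) * Dqinv q (fun t => Iright q b (1 - α) f t) x

/-- right-sided Caputo q-fractional derivative of order `α ∈ (0,1)` -/
def CDright (b α : ℝ) (f : ℝ → ℝ) (x : ℝ) : ℝ :=
  (-1 / q) * Iright q b (1 - α) (Dqinv q f) x

/-- `f ∈ L¹_q(A^*_{q,a})` -/
def MemL1 (a : ℝ) (f : ℝ → ℝ) : Prop := Summable (fun n : ℕ => q ^ n * |f (a * q ^ n)|)

/-- `f ∈ L²_q(A^*_{q,a})` -/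
def MemL2 (a : ℝ) (f : ℝ → ℝ) : Prop := Summable (fun n : ℕ => q ^ n * (f (a * q ^ n)) ^ 2)

/-- the `L²_q` norm -/
def norm2 (a : ℝ) (f : ℝ → ℝ) : ℝ := Real.sqrt (jackson q a (fun t => (f t) ^ 2))

/-- `f` is q-regular at zero (its value at `0` is the limit along the q-grid) -/
def qRegular (a : ℝ) (f : ℝ → ℝ) : Prop :=
  Tendsto (fun n : ℕ => f (a * q ^ n)) atTop (nhds (f 0))

/-- the limit at zero along the q-grid exists -/
def qRegular' (a : ℝ) (f : ℝ → ℝ) : Prop :=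
  ∃ L : ℝ, Tendsto (fun n : ℕ => f (a * q ^ n)) atTop (nhds L)

/-- sup norm on `A^*_{q,a}` -/
def supNorm (a : ℝ) (f : ℝ → ℝ) : ℝ := max (⨆ n : ℕ, |f (a * q ^ n)|) |f 0|

/-- bounded q-variation part of q-absolute continuity -/
def qACvar (a : ℝ) (f : ℝ → ℝ) : Prop :=
  ∃ K : ℝ, ∀ m N : ℕ,
    ∑ j ∈ Finset.range N, |f (a * q ^ (m + j)) - f (a * q ^ (m + j + 1))| ≤ K

/-- q-absolute continuity on `A^*_{q,a}` -/
def qAC (a : ℝ) (f : ℝ → ℝ) : Prop := qRegular q a f ∧ qACvar q a f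

/-- little q-Jacobi polynomial `p_n(x; q^A, q^B | q)` -/
def littleJacobi (n : ℕ) (A B x : ℝ) : ℝ :=
  ∑ k ∈ Finset.range (n + 1),
    pochN q (q ^ (-(n : ℝ))) k * pochN q (q ^ (A + B + (n : ℝ) + 1)) k /
      (pochN q (q ^ (A + 1)) k * pochN q q k) * (q * x) ^ k

end QFrac

/-!
On the grid `t = u q^n` the factor `(qx/t;q)_{α-1}` vanishes for `n > k` (where `x = u q^k`), and
on the lower grid `t = qx q^n` it vanishes identically, so the q-integral is a finite sum. Its
terms are those of the q-Chu–Vandermonde sum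
`∑ₙ aⁿ (b;q)ₙ (a;q)_{k-n} / ((q;q)ₙ (q;q)_{k-n}) = (ab;q)ₖ / (q;q)ₖ` with `a = q^α`, `b = q^β`,
and the constants match the product formula
`B_q(α,β) = (1-q) (q;q)_∞ (q^{α+β};q)_∞ / ((q^α;q)_∞ (q^β;q)_∞)`.
-/

namespace QFrac

open Finset

variable {q : ℝ}

lemma pochN_succ (z : ℝ) (m : ℕ) : pochN q z (m + 1) = pochN q z m * (1 - z * q ^ m) :=
  prod_range_succ _ _

lemma one_sub_mul_pow_pos (hq0 : 0 ≤ q) (hq1 : q ≤ 1) {z : ℝ} (hz : z < 1) (n : ℕ) :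
    0 < 1 - z * q ^ n := by
  have h0 : 0 ≤ q ^ n := pow_nonneg hq0 n
  have h1 : q ^ n ≤ 1 := pow_le_one₀ hq0 hq1
  rcases le_or_gt 0 z with hz0 | hz0 <;> nlinarith

lemma pochN_pos (hq0 : 0 ≤ q) (hq1 : q ≤ 1) {z : ℝ} (hz : z < 1) (m : ℕ) :
    0 < pochN q z m :=
  prod_pos fun n _ => one_sub_mul_pow_pos hq0 hq1 hz n

lemma pochInf_pos (hq0 : 0 ≤ q) (hq1 : q < 1) {z : ℝ} (hz : z < 1) : 0 < pochInf q z := by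
  have hlog : Summable fun n : ℕ => Real.log (1 - z * q ^ n) := by
    simpa only [sub_eq_add_neg, neg_mul_eq_neg_mul] using
      Real.summable_log_one_add_of_summable ((summable_geometric_of_lt_one hq0 hq1).mul_left (-z))
  rw [pochInf, ← Real.rexp_tsum_eq_tprod (one_sub_mul_pow_pos hq0 hq1.le hz) hlog]
  exact Real.exp_pos _

lemma pochInf_eq_pochN_mul (hq0 : 0 ≤ q) (hq1 : q < 1) (z : ℝ) (m : ℕ) :
    pochInf q z = pochN q z m * pochInf q (z * q ^ m) := by
  have htail : Multipliable fun n : ℕ => 1 - z * q ^ (n + m) :=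
    (Real.multipliable_one_add_of_summable
      ((summable_geometric_of_lt_one hq0 hq1).mul_left (-(z * q ^ m)))).congr fun n => by ring
  rw [pochInf, ← Multipliable.prod_mul_tprod_nat_mul' (f := fun n => 1 - z * q ^ n) htail, pochN,
    pochInf]
  congr 1
  exact tprod_congr fun n => by ring

lemma pochInf_eq_zero_of_mul_pow_eq_one {z : ℝ} {j : ℕ} (hj : z * q ^ j = 1) :
    pochInf q z = 0 :=
  tprod_of_exists_eq_zero ⟨j, by rw [hj, sub_self]⟩

lemma poch_eq_zero_of_mul_pow_eq_one {z : ℝ} {j : ℕ} (hj : z * q ^ j = 1) (ν : ℝ) :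
    poch q z ν = 0 := by
  rw [poch, pochInf_eq_zero_of_mul_pow_eq_one hj, zero_div]

lemma poch_pow_succ_sub_one (hq0 : 0 < q) (hq1 : q < 1) {α : ℝ} (hα : 0 < α) (m : ℕ) :
    poch q (q ^ (m + 1)) (α - 1) =
      pochInf q q / pochInf q (q ^ α) * (pochN q (q ^ α) m / pochN q q m) := by
  have hqα : q ^ α < 1 := Real.rpow_lt_one hq0.le hq1 hα
  have hshift : q ^ (m + 1) * q ^ (α - 1) = q ^ α * q ^ m := by
    rw [Real.rpow_sub_one hq0.ne']
    field_simp
    ring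
  have h1 := (pochN_pos hq0.le hq1.le hq1 m).ne'
  have h2 := (pochN_pos hq0.le hq1.le hqα m).ne'
  have h3 := (pochInf_pos hq0.le hq1 (z := q ^ α * q ^ m)
    ((mul_le_of_le_one_right (by positivity) (pow_le_one₀ hq0.le hq1.le)).trans_lt hqα)).ne'
  rw [poch, hshift, pochInf_eq_pochN_mul hq0.le hq1 q m,
    pochInf_eq_pochN_mul hq0.le hq1 (q ^ α) m, pow_succ' q m]
  field_simp

def qBinom (q : ℝ) : ℕ → ℕ → ℝ
  | _, 0 => 1
  | 0, _ + 1 => 0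
  | k + 1, n + 1 => qBinom q k (n + 1) + q ^ (k - n) * qBinom q k n

@[simp]
lemma qBinom_zero_right (k : ℕ) : qBinom q k 0 = 1 := by
  cases k <;> rfl

lemma qBinom_succ_succ (k n : ℕ) :
    qBinom q (k + 1) (n + 1) = qBinom q k (n + 1) + q ^ (k - n) * qBinom q k n :=
  rfl

lemma qBinom_eq_zero_of_lt {k n : ℕ} (h : k < n) : qBinom q k n = 0 := by
  induction k generalizing n with
  | zero => obtain ⟨n, rfl⟩ := Nat.exists_eq_add_one.2 h; rfl
  | succ k ih =>
    obtain ⟨n, rfl⟩ := Nat.exists_eq_add_one.2 (Nat.zero_lt_of_lt h)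
    rw [qBinom_succ_succ, ih (by omega), ih (by omega), mul_zero, add_zero]

lemma qBinom_mul_pochN_mul_pochN {k n : ℕ} (h : n ≤ k) :
    qBinom q k n * pochN q q n * pochN q q (k - n) = pochN q q k := by
  induction k generalizing n with
  | zero => obtain rfl := Nat.le_zero.1 h; simp [pochN]
  | succ k ih =>
    cases n with
    | zero => simp [pochN]
    | succ n =>
      rw [qBinom_succ_succ, pochN_succ q n, pochN_succ q k, Nat.add_sub_add_right]
      rcases (Nat.le_of_succ_le_succ h).eq_or_lt with rfl | hlt
      · have hkk := ih le_rfl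
        rw [Nat.sub_self] at hkk ⊢
        rw [qBinom_eq_zero_of_lt n.lt_succ_self]
        linear_combination (1 - q * q ^ n) * hkk
      · obtain ⟨j, rfl⟩ := Nat.exists_eq_add_of_lt hlt
        have h1 := ih (n := n + 1) (by omega)
        have h0 := ih (n := n) (by omega)
        rw [show n + j + 1 - (n + 1) = j by omega, pochN_succ q n] at h1
        rw [show n + j + 1 - n = j + 1 by omega, pochN_succ q j] at h0 ⊢
        linear_combination (1 - q * q ^ j) * h1 + q ^ (j + 1) * (1 - q * q ^ n) * h0

lemma sum_qBinom_mul_pochN (a b : ℝ) (k : ℕ) :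
    ∑ n ∈ range (k + 1), qBinom q k n * a ^ n * pochN q b n * pochN q a (k - n) =
      pochN q (a * b) k := by
  induction k with
  | zero => simp [pochN]
  | succ k ih =>
    set T : ℕ → ℝ := fun n => qBinom q k n * a ^ n * pochN q b n * pochN q a (k - n)
    set U : ℕ → ℝ := fun n => qBinom q k n * a ^ n * pochN q b n * pochN q a (k + 1 - n)
    have hU :
        ∑ n ∈ range (k + 1 + 1), U n = ∑ n ∈ range (k + 1), T n * (1 - a * q ^ (k - n)) := by
      rw [sum_range_succ, show U (k + 1) = 0 by simp [U, qBinom_eq_zero_of_lt k.lt_succ_self],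
        add_zero]
      refine sum_congr rfl fun n hn => ?_
      simp only [U, T]
      rw [show k + 1 - n = k - n + 1 by grind, pochN_succ]
      ring
    have hstep : ∀ m ∈ range (k + 1), qBinom q (k + 1) (m + 1) * a ^ (m + 1) *
        pochN q b (m + 1) * pochN q a (k + 1 - (m + 1)) =
          U (m + 1) + T m * (a * q ^ (k - m) - a * b * q ^ k) := by
      intro m hm
      have hpow : q ^ (k - m) * q ^ m = q ^ k := by rw [← pow_add]; grind
      simp only [U, T]
      rw [qBinom_succ_succ, pochN_succ b m, Nat.add_sub_add_right]
      linear_combination (-(T m * a * b)) * hpow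
    calc ∑ n ∈ range (k + 1 + 1),
          qBinom q (k + 1) n * a ^ n * pochN q b n * pochN q a (k + 1 - n)
        = U 0 + ∑ m ∈ range (k + 1), (U (m + 1) + T m * (a * q ^ (k - m) - a * b * q ^ k)) := by
          rw [sum_range_succ', sum_congr rfl hstep, add_comm]
          simp [U]
      _ = ∑ n ∈ range (k + 1), T n * (1 - a * b * q ^ k) := by
          rw [sum_add_distrib, ← add_assoc, add_comm (U 0), ← sum_range_succ' U, hU,
            ← sum_add_distrib]
          exact sum_congr rfl fun n _ => by ring
      _ = pochN q (a * b) (k + 1) := by rw [← sum_mul, ih, pochN_succ]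

lemma sum_pow_mul_pochN_div (hq0 : 0 ≤ q) (hq1 : q < 1) (a b : ℝ) (k : ℕ) :
    ∑ n ∈ range (k + 1),
        a ^ n * pochN q b n * pochN q a (k - n) / (pochN q q n * pochN q q (k - n)) =
      pochN q (a * b) k / pochN q q k := by
  have hne (m : ℕ) : pochN q q m ≠ 0 := (pochN_pos hq0 hq1.le hq1 m).ne'
  rw [eq_div_iff (hne k), sum_mul, ← sum_qBinom_mul_pochN]
  refine sum_congr rfl fun n hn => ?_
  rw [← qBinom_mul_pochN_mul_pochN (mem_range_succ_iff.1 hn)]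
  field_simp [hne n, hne (k - n)]

lemma jackson_eq_sum_range {a : ℝ} {f : ℝ → ℝ} {N : ℕ}
    (hf : ∀ n, N ≤ n → f (a * q ^ n) = 0) :
    jackson q a f = (1 - q) * a * ∑ n ∈ range N, q ^ n * f (a * q ^ n) := by
  rw [jackson, tsum_eq_sum fun n hn => by rw [hf n (not_lt.1 (mt mem_range.2 hn)), mul_zero]]

lemma jackson_eq_zero {a : ℝ} {f : ℝ → ℝ} (hf : ∀ n, f (a * q ^ n) = 0) :
    jackson q a f = 0 := by
  simpa using jackson_eq_sum_range (N := 0) fun n _ => hf n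

lemma qGamma_mul_qGamma_div_qGamma_add (hq0 : 0 < q) (hq1 : q < 1) {α β : ℝ} (hα : 0 < α)
    (hβ : 0 < β) :
    qGamma q α * qGamma q β / qGamma q (α + β) =
      (1 - q) * pochInf q q * pochInf q (q ^ (α + β)) /
        (pochInf q (q ^ α) * pochInf q (q ^ β)) := by
  have hw : 0 < 1 - q := by linarith
  have hpow : (1 - q) ^ (1 - α) * (1 - q) ^ (1 - β) = (1 - q) * (1 - q) ^ (1 - (α + β)) := by
    rw [← Real.rpow_add hw, show 1 - α + (1 - β) = 1 + (1 - (α + β)) by ring,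
      Real.rpow_add hw, Real.rpow_one]
  have hpos {γ : ℝ} (hγ : 0 < γ) : 0 < pochInf q (q ^ γ) :=
    pochInf_pos hq0.le hq1 (Real.rpow_lt_one hq0.le hq1 hγ)
  have h1 := hpos hα
  have h2 := hpos hβ
  have h3 := hpos (add_pos hα hβ)
  have h4 := pochInf_pos hq0.le hq1 hq1
  simp only [qGamma]
  field_simp
  exact hpow

def qBetaKernel (q α β x u t : ℝ) : ℝ :=
  t ^ (α - 1) * poch q (q * x / t) (α - 1) * poch q (q * t / u) (β - 1)

lemma qBetaKernel_eq_zero {α β x u t : ℝ} {j : ℕ} (hj : q * x / t * q ^ j = 1) :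
    qBetaKernel q α β x u t = 0 := by
  rw [qBetaKernel, poch_eq_zero_of_mul_pow_eq_one hj, mul_zero, zero_mul]

lemma pow_mul_qBetaKernel_grid (hq0 : 0 < q) (hq1 : q < 1) {α β u : ℝ} (hα : 0 < α)
    (hβ : 0 < β) (hu : 0 < u) (n m : ℕ) :
    q ^ n * qBetaKernel q α β (u * q ^ (n + m)) u (u * q ^ n) =
      u ^ (α - 1) * (pochInf q q / pochInf q (q ^ α)) * (pochInf q q / pochInf q (q ^ β)) *
        ((q ^ α) ^ n * pochN q (q ^ β) n * pochN q (q ^ α) m / (pochN q q n * pochN q q m)) := by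
  have harg1 : q * (u * q ^ (n + m)) / (u * q ^ n) = q ^ (m + 1) := by field_simp; ring
  have harg2 : q * (u * q ^ n) / u = q ^ (n + 1) := by field_simp; ring
  have hpow : (u * q ^ n) ^ (α - 1) = u ^ (α - 1) * (q ^ α) ^ n / q ^ n := by
    rw [Real.mul_rpow hu.le (by positivity), Real.rpow_sub_one (pow_pos hq0 n).ne',
      Real.rpow_pow_comm hq0.le]
    ring
  have h1 := (pochN_pos hq0.le hq1.le hq1 n).ne'
  have h2 := (pochN_pos hq0.le hq1.le hq1 m).ne'
  rw [qBetaKernel, harg1, harg2, hpow, poch_pow_succ_sub_one hq0 hq1 hα m,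
    poch_pow_succ_sub_one hq0 hq1 hβ n]
  field_simp

lemma jackson_qBetaKernel (hq0 : 0 < q) (hq1 : q < 1) {α β u : ℝ} (hα : 0 < α) (hβ : 0 < β)
    (hu : 0 < u) (k : ℕ) :
    jackson q u (qBetaKernel q α β (u * q ^ k) u) =
      (1 - q) * u ^ α * (pochInf q q / pochInf q (q ^ α)) * (pochInf q q / pochInf q (q ^ β)) *
        (pochN q (q ^ α * q ^ β) k / pochN q q k) := by
  have hvanish (n : ℕ) (hn : k + 1 ≤ n) :
      qBetaKernel q α β (u * q ^ k) u (u * q ^ n) = 0 := by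
    obtain ⟨j, rfl⟩ := Nat.exists_eq_add_of_le hn
    refine qBetaKernel_eq_zero (j := j) ?_
    field_simp
    ring
  have hterm (n : ℕ) (hn : n ∈ range (k + 1)) :
      q ^ n * qBetaKernel q α β (u * q ^ k) u (u * q ^ n) =
        u ^ (α - 1) * (pochInf q q / pochInf q (q ^ α)) * (pochInf q q / pochInf q (q ^ β)) *
          ((q ^ α) ^ n * pochN q (q ^ β) n * pochN q (q ^ α) (k - n) /
            (pochN q q n * pochN q q (k - n))) := by
    obtain ⟨m, rfl⟩ := Nat.exists_eq_add_of_le (mem_range_succ_iff.1 hn)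
    rw [Nat.add_sub_cancel_left]
    exact pow_mul_qBetaKernel_grid hq0 hq1 hα hβ hu n m
  rw [jackson_eq_sum_range hvanish, sum_congr rfl hterm, ← mul_sum,
    sum_pow_mul_pochN_div hq0.le hq1, Real.rpow_sub_one hu.ne']
  field_simp

end QFrac

open QFrac Finset

/-- q-beta-type integral identity. -/
theorem stmt3 (q α β u x : ℝ) (hq : 0 < q) (hq1 : q < 1) (hα : 0 < α) (hβ : 0 < β)
    (hu : 0 < u) (k : ℕ) (hx : x = u * q ^ k) :
    QFrac.jacksonI q (q * x) u
        (fun t => t ^ (α - 1) * QFrac.poch q (q * x / t) (α - 1) *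
          QFrac.poch q (q * t / u) (β - 1)) =
      u ^ α * (QFrac.qGamma q α * QFrac.qGamma q β / QFrac.qGamma q (α + β)) *
        QFrac.poch q (q * x / u) (α + β - 1) := by
  subst hx
  change jacksonI q (q * (u * q ^ k)) u (qBetaKernel q α β (u * q ^ k) u) = _
  have hlower : jackson q (q * (u * q ^ k)) (qBetaKernel q α β (u * q ^ k) u) = 0 :=
    jackson_eq_zero fun n => qBetaKernel_eq_zero (j := n) (by field_simp)
  have hxu : q * (u * q ^ k) / u = q ^ (k + 1) := by field_simp; ring
  rw [jacksonI, hlower, sub_zero, jackson_qBetaKernel hq hq1 hα hβ hu, hxu,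
    poch_pow_succ_sub_one hq hq1 (add_pos hα hβ), qGamma_mul_qGamma_div_qGamma_add hq hq1 hα hβ,
    Real.rpow_add hq]
  have h1 := (pochN_pos hq.le hq1.le hq1 k).ne'
  have h2 := (pochInf_pos hq.le hq1 (Real.rpow_lt_one hq.le hq1 hα)).ne'
  have h3 := (pochInf_pos hq.le hq1 (Real.rpow_lt_one hq.le hq1 hβ)).ne'
  have h4 := (pochInf_pos hq.le hq1 (Real.rpow_lt_one hq.le hq1 (add_pos hα hβ))).ne'
  rw [Real.rpow_add hq] at h4
  field_simp
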